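/- In the situation of Lemma 5.6 (good quotient of an inverse sequence of compact metric spaces satisfying conditions (p1) and (p2)), the induced map ρ : lim← P → lim← P* is injective: if z = (z_i) and w = (w_i) are distinct threads of P, then there exists k such that z_k and w_k do not belong to a common element of the partition Q_k. -/

import Mathlib

/-
If `z ≠ w` but `z_i` and `w_i` share a partition class for every `i`, fix `k`. For every `d`,
both `z_k` and `w_k` lie in `π_{k+d,k}` of the class of `z_{k+d}`, and by (p2) (applied to the
thread `z`, which is compatible with its own classes) these images have diameter tending to `0`;
they are bounded because `P_k` is compact, so the diameter really bounds `dist z_k w_k`.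
Hence `z_k = w_k` for all `k`, a contradiction.
-/

/-- The composition `π_{k+d,k} = π_k ∘ ⋯ ∘ π_{k+d-1}` of the bonding maps of an
inverse sequence. -/
def bondAux {P : ℕ → Type} (π : ∀ n, P (n+1) → P n) (k : ℕ) : ∀ d : ℕ, P (k + d) → P k
  | 0 => id
  | d+1 => fun x => bondAux π k d (π (k + d) x)

lemma bondAux_thread {P : ℕ → Type} (π : ∀ n, P (n+1) → P n)
    (x : ∀ i, P i) (hx : ∀ i, π i (x (i+1)) = x i) (k : ℕ) :
    ∀ d : ℕ, bondAux π k d (x (k + d)) = x k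
  | 0 => rfl
  | d+1 => by
      show bondAux π k d (π (k + d) (x (k + d + 1))) = x k
      rw [hx (k + d)]
      exact bondAux_thread π x hx k d

lemma dist_le_diam_image_bondAux {P : ℕ → Type} [∀ i, PseudoMetricSpace (P i)]
    [∀ i, BoundedSpace (P i)] {π : ∀ n, P (n+1) → P n} {x y : ∀ i, P i}
    (hx : ∀ i, π i (x (i+1)) = x i) (hy : ∀ i, π i (y (i+1)) = y i) {k d : ℕ}
    {s : Set (P (k + d))} (hxs : x (k + d) ∈ s) (hys : y (k + d) ∈ s) :
    dist (x k) (y k) ≤ Metric.diam (bondAux π k d '' s) :=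
  Metric.dist_le_diam_of_mem (Bornology.IsBounded.all _)
    ⟨_, hxs, bondAux_thread π x hx k d⟩ ⟨_, hys, bondAux_thread π y hy k d⟩

theorem stmt9_general (P : ℕ → Type) [∀ i, MetricSpace (P i)] [∀ i, CompactSpace (P i)]
    (π : ∀ i, P (i+1) → P i)
    (S : ∀ i, P i → P i → Prop) (hEq : ∀ i, Equivalence (S i))
    (h2 : ∀ (k : ℕ) (x : ∀ i, P i),
      (∀ d : ℕ, S (k+d) (π (k+d) (x (k+d+1))) (x (k+d))) →
      ∀ ε > 0, ∃ N, ∀ d ≥ N,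
        Metric.diam (bondAux π k d '' {y | S (k+d) (x (k+d)) y}) < ε)
    (z w : {x : ∀ i, P i // ∀ i, π i (x (i+1)) = x i}) (hzw : z ≠ w) :
    ∃ k, ¬ S k (z.1 k) (w.1 k) := by
  by_contra! hS
  refine hzw (Subtype.ext (funext fun k => eq_of_forall_dist_le fun ε hε => ?_))
  have hz_compatible : ∀ d, S (k+d) (π (k+d) (z.1 (k+d+1))) (z.1 (k+d)) := fun d => by
    rw [z.2 (k+d)]
    exact (hEq (k+d)).refl _
  obtain ⟨N, hN⟩ := h2 k z.1 hz_compatible ε hε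
  calc dist (z.1 k) (w.1 k)
      ≤ Metric.diam (bondAux π k N '' {y | S (k+N) (z.1 (k+N)) y}) :=
        dist_le_diam_image_bondAux z.2 w.2 ((hEq (k+N)).refl _) (hS (k+N))
    _ ≤ ε := (hN N le_rfl).le

/-- Injectivity part of Lemma 5.6: under conditions (p1) and (p2), distinct threads of
the inverse sequence become distinct in the quotient sequence: there is an index `k`
at which the two threads do not lie in a common partition class. In particular the
induced map `ρ` of inverse limits is injective. -/
theorem stmt9 (P : ℕ → Type) [∀ i, MetricSpace (P i)] [∀ i, CompactSpace (P i)]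
    (π : ∀ i, P (i+1) → P i) (hπ : ∀ i, Continuous (π i))
    (S : ∀ i, P i → P i → Prop) (hEq : ∀ i, Equivalence (S i))
    (hcl : ∀ i (x : P i), IsClosed {y | S i x y})
    (husc : ∀ i, IsClosedMap (Quot.mk (S i)))
    (h1 : ∀ i x y, S (i+1) x y → S i (π i x) (π i y))
    (h2 : ∀ (k : ℕ) (x : ∀ i, P i),
      (∀ d : ℕ, S (k+d) (π (k+d) (x (k+d+1))) (x (k+d))) →
      ∀ ε > 0, ∃ N, ∀ d ≥ N,
        Metric.diam (bondAux π k d '' {y | S (k+d) (x (k+d)) y}) < ε)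
    (z w : {x : ∀ i, P i // ∀ i, π i (x (i+1)) = x i}) (hzw : z ≠ w) :
    ∃ k, ¬ S k (z.1 k) (w.1 k) :=
  stmt9_general P π S hEq h2 z w hzw
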